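/- arXiv:2307.10026 — 3 statements merged into one kernel-verified Lean document; each statement's English description precedes it below -/
import Mathlib

section
/- For every linear predictor of the form w = [w1, w2, 0_d] ∈ ℝ^{3d} with (w1, w2) ≠ (0, 0), the accuracy of w on the context-c1 distribution equals 0.5 · erfc( −((w1 + w2)ᵀμ) / (σ·√(2(‖w1‖₂² + γ‖w2‖₂²))) ). -/
open MeasureTheory ProbabilityTheory Real Filter
open scoped ENNReal NNReal

noncomputable section

/-- Complementary error function `erfc x = (2/√π) ∫_x^∞ e^{−t²} dt`. -/
def erfc (x : ℝ) : ℝ := 2 / Real.sqrt Real.pi * ∫ t in Set.Ioi x, Real.exp (-t ^ 2)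

/-- A vector in `ℝ^d`. -/
abbrev Vec (d : ℕ) := Fin d → ℝ

/-- The input space `ℝ^{3d}`, viewed as three blocks `x = [x1, x2, x3]`. -/
abbrev Inp (d : ℕ) := Vec d × Vec d × Vec d

/-- Euclidean dot product on `ℝ^d`. -/
def dot {d : ℕ} (v w : Vec d) : ℝ := ∑ i, v i * w i

/-- Euclidean norm on `ℝ^d`. -/
def vnorm {d : ℕ} (v : Vec d) : ℝ := Real.sqrt (∑ i, v i ^ 2)

/-- Euclidean norm on the full input space `ℝ^{3d}`. -/
def xnorm {d : ℕ} (x : Inp d) : ℝ :=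
  Real.sqrt ((∑ i, x.1 i ^ 2) + (∑ i, x.2.1 i ^ 2) + ∑ i, x.2.2 i ^ 2)

/-- Value `wᵀx` of the linear predictor `w` at input `x`. -/
def pred {d : ℕ} (w x : Inp d) : ℝ := dot w.1 x.1 + dot w.2.1 x.2.1 + dot w.2.2 x.2.2

/-- Isotropic Gaussian `N(m, v·I_d)` on `ℝ^d` (product of coordinate Gaussians). -/
def gaussVec (d : ℕ) (m : Vec d) (v : ℝ) : Measure (Vec d) :=
  Measure.pi fun i => gaussianReal (m i) (Real.toNNReal v)

/-- Conditional law of `x` given the label `y` in context `c1`: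
`x1 ~ N(μy, σ²I)`, `x2 ~ N(μy, γσ²I)`, `x3 ~ N(μ, η²I)`, independent blocks. -/
def condX1 (d : ℕ) (μ : Vec d) (σ γ η : ℝ) (y : ℝ) : Measure (Inp d) :=
  (gaussVec d (fun i => μ i * y) (σ ^ 2)).prod
    ((gaussVec d (fun i => μ i * y) (γ * σ ^ 2)).prod
      (gaussVec d μ (η ^ 2)))

/-- Conditional law of `x` given the label `y` in context `c2`:
`x1 ~ N(μy, σ²I)`, `x2 ~ N(−μy, (σ²/γ)I)`, `x3 ~ N(−μ, η²I)`, independent blocks. -/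
def condX2 (d : ℕ) (μ : Vec d) (σ γ η : ℝ) (y : ℝ) : Measure (Inp d) :=
  (gaussVec d (fun i => μ i * y) (σ ^ 2)).prod
    ((gaussVec d (fun i => -μ i * y) (σ ^ 2 / γ)).prod
      (gaussVec d (fun i => -μ i) (η ^ 2)))

/-- Joint law of `(x, y)`: `y` uniform on `{−1, 1}`, then `x ~ cond y`. -/
def jointOf {d : ℕ} (cond : ℝ → Measure (Inp d)) : Measure (Inp d × ℝ) :=
  (2 : ℝ≥0∞)⁻¹ • (cond 1).prod (Measure.dirac (1 : ℝ))
    + (2 : ℝ≥0∞)⁻¹ • (cond (-1)).prod (Measure.dirac (-1 : ℝ))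

/-- The context-`c1` distribution over `(x, y)`. -/
def Pc1 (d : ℕ) (μ : Vec d) (σ γ η : ℝ) : Measure (Inp d × ℝ) :=
  jointOf (condX1 d μ σ γ η)

/-- The context-`c2` distribution over `(x, y)`. -/
def Pc2 (d : ℕ) (μ : Vec d) (σ γ η : ℝ) : Measure (Inp d × ℝ) :=
  jointOf (condX2 d μ σ γ η)

/-- Accuracy `Acc_P(w) = P(sign(wᵀx) = y)` of linear predictor `w` under joint law `P`. -/
def AccP {d : ℕ} (P : Measure (Inp d × ℝ)) (w : Inp d) : ℝ :=
  (P {p | Real.sign (pred w p.1) = p.2}).toReal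

/-- Norm-bounded linear predictors `W1 = {w ∈ ℝ^{3d} : ‖w‖₂ ≤ 1}`. -/
def W1 (d : ℕ) : Set (Inp d) := {w | xnorm w ≤ 1}

/-- Population exponential loss `E_P[exp(−y·wᵀx)]`. -/
def expLoss {d : ℕ} (P : Measure (Inp d × ℝ)) (w : Inp d) : ℝ :=
  ∫ p, Real.exp (-(p.2 * pred w p.1)) ∂P

end

/-! Given the label `y`, the score `wᵀx = w1ᵀx1 + w2ᵀx2` is a sum of independent one-dimensional
Gaussians, hence `N(y m, V)` with `m = (w1 + w2)ᵀμ` and `V = σ²(‖w1‖² + γ‖w2‖²)`. Flipping the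
label reflects this law, so both labels are classified correctly with the same probability
`P(N(m, V) > 0) = ½ erfc(-m / √(2V))`. -/

lemma map_prod_add_eq_conv_map {α β : Type*} [MeasurableSpace α] [MeasurableSpace β]
    (P : Measure α) (Q : Measure β) [SFinite P] [SFinite Q]
    {f : α → ℝ} {g : β → ℝ} (hf : Measurable f) (hg : Measurable g) :
    (P.prod Q).map (fun p => f p.1 + g p.2) = P.map f ∗ Q.map g := by
  rw [Measure.conv, Measure.map_prod_map _ _ hf hg,
    Measure.map_map (by fun_prop) (hf.prodMap hg)]
  rfl

lemma ProbabilityTheory.iIndepFun.map_finsetSum_eq_gaussianReal {ι Ω : Type*}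
    {mΩ : MeasurableSpace Ω} {P : Measure Ω} [IsProbabilityMeasure P] {X : ι → Ω → ℝ}
    (hX : iIndepFun X P) (hmeas : ∀ i, Measurable (X i)) {m : ι → ℝ} {v : ι → ℝ≥0}
    (hlaw : ∀ i, P.map (X i) = gaussianReal (m i) (v i)) (s : Finset ι) :
    P.map (∑ i ∈ s, X i) = gaussianReal (∑ i ∈ s, m i) (∑ i ∈ s, v i) := by
  classical
  induction s using Finset.induction_on with
  | empty => simp [gaussianReal_zero_var, Pi.zero_def]
  | insert a s ha ih =>
    rw [Finset.sum_insert ha, Finset.sum_insert ha, Finset.sum_insert ha, add_comm (X a),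
      add_comm (m a), add_comm (v a)]
    exact gaussianReal_add_gaussianReal_of_indepFun
      (hX.indepFun_finsetSum_of_notMem hmeas ha) ih (hlaw a)

lemma map_sum_mul_pi_gaussianReal {ι : Type*} [Fintype ι] (c m : ι → ℝ) (v : ι → ℝ≥0) :
    (Measure.pi fun i => gaussianReal (m i) (v i)).map (fun x => ∑ i, c i * x i)
      = gaussianReal (∑ i, c i * m i) (∑ i, (c i ^ 2).toNNReal * v i) := by
  have hX : iIndepFun (fun i (x : ι → ℝ) => c i * x i)
      (Measure.pi fun i => gaussianReal (m i) (v i)) :=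
    iIndepFun_pi (X := fun i (t : ℝ) => c i * t) fun i => by fun_prop
  have hlaw (i : ι) : (Measure.pi fun i => gaussianReal (m i) (v i)).map (fun x => c i * x i)
      = gaussianReal (c i * m i) ((c i ^ 2).toNNReal * v i) := by
    rw [show (fun x : ι → ℝ => c i * x i) = (c i * ·) ∘ Function.eval i from rfl,
      ← Measure.map_map (by fun_prop) (by fun_prop), (measurePreserving_eval _ i).map_eq,
      gaussianReal_map_const_mul, Real.toNNReal_of_nonneg (sq_nonneg _)]
  simpa [Finset.sum_fn] using
    hX.map_finsetSum_eq_gaussianReal (fun i => by fun_prop) hlaw Finset.univ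

lemma gaussianReal_Ioi_toReal_eq_erfc (m a : ℝ) {v : ℝ≥0} (hv : v ≠ 0) :
    (gaussianReal m v (Set.Ioi a)).toReal = 2⁻¹ * erfc ((a - m) / √(2 * v)) := by
  have hshift : gaussianReal m v (Set.Ioi a) = gaussianReal 0 v (Set.Ioi (a - m)) := by
    rw [← zero_add m, ← gaussianReal_map_add_const,
      Measure.map_apply (measurable_add_const m) measurableSet_Ioi, Set.preimage_add_const_Ioi,
      zero_add]
  set s := √(2 * (v : ℝ))
  have hs : 0 < s := by
    have : (0 : ℝ) < v := NNReal.coe_pos.mpr (pos_iff_ne_zero.mpr hv)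
    positivity
  have hpdf (x : ℝ) :
      gaussianPDFReal 0 v x = (√(2 * π * v))⁻¹ * rexp (-(s⁻¹ * x) ^ 2) := by
    rw [gaussianPDFReal, sub_zero, mul_pow, inv_pow, Real.sq_sqrt (by positivity)]
    ring_nf
  have hconst : (√(2 * π * v))⁻¹ * s = (√π)⁻¹ := by
    rw [show 2 * π * (v : ℝ) = π * (2 * v) by ring, Real.sqrt_mul Real.pi_pos.le, mul_inv,
      mul_assoc, inv_mul_cancel₀ hs.ne', mul_one]
  rw [hshift, gaussianReal_apply_eq_integral _ hv, ENNReal.toReal_ofReal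
      (setIntegral_nonneg measurableSet_Ioi fun x _ => gaussianPDFReal_nonneg _ _ _)]
  simp_rw [hpdf]
  rw [integral_const_mul, integral_comp_mul_left_Ioi (fun t => rexp (-t ^ 2)) _ (inv_pos.mpr hs),
    inv_inv, smul_eq_mul, ← mul_assoc, hconst, erfc]
  ring_nf

lemma Real.measurable_sign : Measurable Real.sign :=
  Measurable.ite (measurableSet_lt measurable_id measurable_const) measurable_const
    (Measurable.ite (measurableSet_lt measurable_const measurable_id) measurable_const
      measurable_const)

lemma Real.sign_eq_one_iff {r : ℝ} : Real.sign r = 1 ↔ 0 < r := by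
  rcases lt_trichotomy r 0 with h | rfl | h
  · simp [Real.sign_of_neg h, h.not_gt]
    norm_num
  · simp
  · simp [Real.sign_of_pos h, h]

@[fun_prop]
lemma measurable_dot {d : ℕ} (c : Vec d) : Measurable (dot c) := by
  unfold dot
  fun_prop

lemma measurable_pred {d : ℕ} (w : Inp d) : Measurable (pred w) := by
  unfold pred
  fun_prop

lemma vnorm_pos_iff {d : ℕ} {v : Vec d} : 0 < vnorm v ↔ v ≠ 0 := by
  simp [vnorm, Finset.sum_pos_iff_of_nonneg, sq_nonneg, Function.ne_iff, sq_pos_iff]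

lemma map_dot_gaussVec {d : ℕ} (c m : Vec d) (s : ℝ) :
    (gaussVec d m s).map (dot c) = gaussianReal (dot c m) (s * vnorm c ^ 2).toNNReal := by
  unfold gaussVec
  rw [show dot c = fun x => ∑ i, c i * x i from rfl, map_sum_mul_pi_gaussianReal, vnorm,
    Real.sq_sqrt (by positivity), ← Finset.sum_mul,
    ← Real.toNNReal_sum_of_nonneg fun i _ => sq_nonneg _, ← Real.toNNReal_mul (by positivity),
    mul_comm]

instance {d : ℕ} (m : Vec d) (s : ℝ) : IsProbabilityMeasure (gaussVec d m s) := by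
  unfold gaussVec
  infer_instance

instance {d : ℕ} (μ : Vec d) (σ γ η y : ℝ) : IsProbabilityMeasure (condX1 d μ σ γ η y) := by
  unfold condX1
  infer_instance

lemma map_pred_condX1 {d : ℕ} (μ : Vec d) (σ : ℝ) {γ : ℝ} (hγ : 0 ≤ γ) (η y : ℝ)
    (w1 w2 : Vec d) :
    (condX1 d μ σ γ η y).map (pred (w1, w2, 0))
      = gaussianReal (y * dot (w1 + w2) μ)
          (σ ^ 2 * (vnorm w1 ^ 2 + γ * vnorm w2 ^ 2)).toNNReal := by
  have hpred : pred (w1, w2, 0) = fun x : Inp d => dot w1 x.1 + (dot w2 x.2.1 + dot 0 x.2.2) := by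
    funext x
    simp only [pred, add_assoc]
  unfold condX1
  rw [hpred, map_prod_add_eq_conv_map (g := fun q : Vec d × Vec d => dot w2 q.1 + dot 0 q.2)
      _ _ (measurable_dot w1) (by fun_prop),
    map_prod_add_eq_conv_map _ _ (measurable_dot w2) (measurable_dot 0), map_dot_gaussVec,
    map_dot_gaussVec, map_dot_gaussVec, gaussianReal_conv_gaussianReal,
    gaussianReal_conv_gaussianReal]
  congr 1
  · simp only [dot, Pi.add_apply, Pi.zero_apply, zero_mul, Finset.sum_const_zero, add_zero,
      ← Finset.sum_add_distrib, Finset.mul_sum]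
    exact Finset.sum_congr rfl fun i _ => by ring
  · have hvnorm0 : vnorm (0 : Vec d) = 0 := by simp [vnorm]
    rw [hvnorm0, zero_pow two_ne_zero, mul_zero, Real.toNNReal_zero, add_zero,
      ← Real.toNNReal_add (by positivity) (by positivity)]
    ring_nf

lemma accP_jointOf_eq_gaussianReal_Ioi {d : ℕ} (cond : ℝ → Measure (Inp d))
    [∀ y, SFinite (cond y)] (w : Inp d) (m : ℝ) (V : ℝ≥0)
    (hlaw : ∀ y, (cond y).map (pred w) = gaussianReal (y * m) V) :
    AccP (jointOf cond) w = (gaussianReal m V (Set.Ioi 0)).toReal := by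
  have hsign (y : ℝ) : MeasurableSet {t : ℝ | Real.sign t = y} :=
    measurableSet_eq_fun Real.measurable_sign measurable_const
  have hE : MeasurableSet {p : Inp d × ℝ | Real.sign (pred w p.1) = p.2} :=
    measurableSet_eq_fun (Real.measurable_sign.comp ((measurable_pred w).comp measurable_fst))
      measurable_snd
  have hslice (y : ℝ) : ((cond y).prod (Measure.dirac y)) {p | Real.sign (pred w p.1) = p.2}
      = gaussianReal (y * m) V {t | Real.sign t = y} := by
    rw [Measure.prod_dirac, Measure.map_apply measurable_prodMk_right hE,
      ← hlaw y, Measure.map_apply (measurable_pred w) (hsign y)]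
    rfl
  have hpos : {t : ℝ | Real.sign t = 1} = Set.Ioi 0 := Set.ext fun t => Real.sign_eq_one_iff
  have hneg : gaussianReal (-1 * m) V {t | Real.sign t = -1} = gaussianReal m V (Set.Ioi 0) := by
    rw [neg_one_mul, ← gaussianReal_map_neg, Measure.map_apply measurable_neg (hsign _), ← hpos]
    congr 1
    ext t
    simp [Real.sign_neg]
  rw [AccP, jointOf, Measure.add_apply, Measure.smul_apply, Measure.smul_apply, hslice, hslice,
    one_mul, hpos, hneg, smul_eq_mul, ← add_mul, ENNReal.inv_two_add_inv_two, one_mul]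

theorem accuracy_formula_context_c1_general (d : ℕ) (μ : Vec d)
    (σ γ η : ℝ) (hσ : 0 < σ) (hγ : 0 < γ)
    (w1 w2 : Vec d) (hw : ¬(w1 = 0 ∧ w2 = 0)) :
    AccP (Pc1 d μ σ γ η) (w1, w2, (0 : Vec d)) =
      0.5 * erfc (-(dot (w1 + w2) μ) /
        (σ * Real.sqrt (2 * (vnorm w1 ^ 2 + γ * vnorm w2 ^ 2)))) := by
  set V := σ ^ 2 * (vnorm w1 ^ 2 + γ * vnorm w2 ^ 2)
  have hV : 0 < V := by
    rcases not_and_or.mp hw with h | h <;> have := vnorm_pos_iff.2 h <;> positivity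
  have hsqrt : σ * √(2 * (vnorm w1 ^ 2 + γ * vnorm w2 ^ 2)) = √(2 * V) := by
    rw [show 2 * V = σ ^ 2 * (2 * (vnorm w1 ^ 2 + γ * vnorm w2 ^ 2)) by ring,
      Real.sqrt_mul (sq_nonneg σ), Real.sqrt_sq hσ.le]
  rw [Pc1, accP_jointOf_eq_gaussianReal_Ioi _ _ _ _ (map_pred_condX1 μ σ hγ.le η · w1 w2),
    gaussianReal_Ioi_toReal_eq_erfc _ _ (by simpa using hV), Real.coe_toNNReal _ hV.le,
    zero_sub, hsqrt]
  norm_num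

theorem accuracy_formula_context_c1 (d : ℕ) (hd : 1 ≤ d) (μ : Vec d) (hμ : μ ≠ 0)
    (σ γ η : ℝ) (hσ : 0 < σ) (hγ : 0 < γ) (hη : 0 < η)
    (w1 w2 : Vec d) (hw : ¬(w1 = 0 ∧ w2 = 0)) :
    AccP (Pc1 d μ σ γ η) (w1, w2, (0 : Vec d)) =
      0.5 * erfc (-(dot (w1 + w2) μ) /
        (σ * Real.sqrt (2 * (vnorm w1 ^ 2 + γ * vnorm w2 ^ 2)))) :=
  accuracy_formula_context_c1_general d μ σ γ η hσ hγ w1 w2 hw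
end

section
/- Let ρ1 > 0 and 0 < γ < 1. For every (λ1, λ2) ∈ ℝ² with λ1² + λ2² = 1, min{ erfc(−ρ1·(λ1+λ2)/√(λ1² + γλ2²)), erfc(−ρ1·(λ1−λ2)/√(λ1² + λ2²/γ)) } ≤ erfc(−ρ1), with equality at (λ1, λ2) = (1, 0). Hence the supremum of this min over the unit circle equals erfc(−ρ1) and is attained at (1, 0). -/
open MeasureTheory ProbabilityTheory Real Filter
open scoped ENNReal NNReal

/-!
Since `erfc` is decreasing, it suffices that one of the two arguments
`ρ₁ (λ₁ ± λ₂) / √(λ₁² + c λ₂²)` is at most `ρ₁`. Taking the first context when `λ₂ ≤ 0` and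
the second when `λ₂ ≥ 0`, the numerator has the form `a + b` with `b ≤ 0`, and then
`a + b ≤ √(a² + c b²)` for every `c ≥ 0`.
-/
theorem erfc_antitone : Antitone erfc := by
  intro x y hxy
  unfold erfc
  refine mul_le_mul_of_nonneg_left ?_ (by positivity)
  refine setIntegral_mono_set ?_ (.of_forall fun t => (exp_pos _).le)
    (Set.Ioi_subset_Ioi hxy).eventuallyLE
  simpa using (integrable_exp_neg_mul_sq one_pos).integrableOn

theorem add_le_sqrt_sq_add_mul_sq {a b c : ℝ} (hb : b ≤ 0) (hc : 0 ≤ c) :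
    a + b ≤ √(a ^ 2 + c * b ^ 2) := by
  rcases le_or_gt (a + b) 0 with hab | hab
  · exact hab.trans (sqrt_nonneg _)
  · exact le_sqrt_of_sq_le (by nlinarith [mul_nonpos_of_nonneg_of_nonpos hc hb])

theorem mul_div_le_self_of_le {ρ s t : ℝ} (hρ : 0 ≤ ρ) (ht : 0 ≤ t) (hst : s ≤ t) :
    ρ * s / t ≤ ρ := by
  rw [mul_div_assoc]
  exact mul_le_of_le_one_right hρ (div_le_one_of_le₀ hst ht)

theorem erfc_neg_le_of_le_sqrt {ρ s D : ℝ} (hρ : 0 ≤ ρ) (hs : s ≤ √D) :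
    erfc (-(ρ * s / √D)) ≤ erfc (-ρ) :=
  erfc_antitone (neg_le_neg (mul_div_le_self_of_le hρ (sqrt_nonneg D) hs))

/-- The smaller of the two per-context accuracies (up to a factor `1/2`) of the predictor
`λ₁ [μ/‖μ‖, 0, 0] + λ₂ [0, μ/‖μ‖, 0]`, for signal-to-noise ratio `ρ₁`. -/
noncomputable def minContextAcc (ρ γ l1 l2 : ℝ) : ℝ :=
  min (erfc (-(ρ * (l1 + l2) / √(l1 ^ 2 + γ * l2 ^ 2))))
    (erfc (-(ρ * (l1 - l2) / √(l1 ^ 2 + l2 ^ 2 / γ))))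

theorem minContextAcc_le {ρ γ : ℝ} (hρ : 0 ≤ ρ) (hγ : 0 ≤ γ) (l1 l2 : ℝ) :
    minContextAcc ρ γ l1 l2 ≤ erfc (-ρ) := by
  rcases le_total l2 0 with hl2 | hl2
  · exact min_le_of_left_le <| erfc_neg_le_of_le_sqrt hρ (add_le_sqrt_sq_add_mul_sq hl2 hγ)
  · refine min_le_of_right_le <| erfc_neg_le_of_le_sqrt hρ ?_
    rw [sub_eq_add_neg, div_eq_inv_mul, ← neg_sq l2]
    exact add_le_sqrt_sq_add_mul_sq (neg_nonpos.2 hl2) (inv_nonneg.2 hγ)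

theorem minContextAcc_one_zero (ρ γ : ℝ) : minContextAcc ρ γ 1 0 = erfc (-ρ) := by
  simp [minContextAcc]

theorem condro_erfc_min_bound_general (ρ1 γ : ℝ) (hρ : 0 < ρ1) (hγ0 : 0 < γ) :
    (∀ l1 l2 : ℝ, l1 ^ 2 + l2 ^ 2 = 1 →
      min (erfc (-(ρ1 * (l1 + l2) / Real.sqrt (l1 ^ 2 + γ * l2 ^ 2))))
          (erfc (-(ρ1 * (l1 - l2) / Real.sqrt (l1 ^ 2 + l2 ^ 2 / γ))))
        ≤ erfc (-ρ1)) ∧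
    min (erfc (-(ρ1 * ((1 : ℝ) + 0) / Real.sqrt ((1 : ℝ) ^ 2 + γ * (0 : ℝ) ^ 2))))
        (erfc (-(ρ1 * ((1 : ℝ) - 0) / Real.sqrt ((1 : ℝ) ^ 2 + (0 : ℝ) ^ 2 / γ))))
      = erfc (-ρ1) ∧
    IsGreatest {m : ℝ | ∃ l1 l2 : ℝ, l1 ^ 2 + l2 ^ 2 = 1 ∧
        m = min (erfc (-(ρ1 * (l1 + l2) / Real.sqrt (l1 ^ 2 + γ * l2 ^ 2))))
                (erfc (-(ρ1 * (l1 - l2) / Real.sqrt (l1 ^ 2 + l2 ^ 2 / γ))))}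
      (erfc (-ρ1)) := by
  have hle := minContextAcc_le hρ.le hγ0.le
  have heq := minContextAcc_one_zero ρ1 γ
  refine ⟨fun l1 l2 _ => hle l1 l2, heq, ⟨⟨1, 0, by norm_num, heq.symm⟩, ?_⟩⟩
  rintro m ⟨l1, l2, -, rfl⟩
  exact hle l1 l2

theorem condro_erfc_min_bound (ρ1 γ : ℝ) (hρ : 0 < ρ1) (hγ0 : 0 < γ) (hγ1 : γ < 1) :
    (∀ l1 l2 : ℝ, l1 ^ 2 + l2 ^ 2 = 1 →
      min (erfc (-(ρ1 * (l1 + l2) / Real.sqrt (l1 ^ 2 + γ * l2 ^ 2))))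
          (erfc (-(ρ1 * (l1 - l2) / Real.sqrt (l1 ^ 2 + l2 ^ 2 / γ))))
        ≤ erfc (-ρ1)) ∧
    min (erfc (-(ρ1 * ((1 : ℝ) + 0) / Real.sqrt ((1 : ℝ) ^ 2 + γ * (0 : ℝ) ^ 2))))
        (erfc (-(ρ1 * ((1 : ℝ) - 0) / Real.sqrt ((1 : ℝ) ^ 2 + (0 : ℝ) ^ 2 / γ))))
      = erfc (-ρ1) ∧
    IsGreatest {m : ℝ | ∃ l1 l2 : ℝ, l1 ^ 2 + l2 ^ 2 = 1 ∧
        m = min (erfc (-(ρ1 * (l1 + l2) / Real.sqrt (l1 ^ 2 + γ * l2 ^ 2))))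
                (erfc (-(ρ1 * (l1 - l2) / Real.sqrt (l1 ^ 2 + l2 ^ 2 / γ))))}
      (erfc (-ρ1)) :=
  condro_erfc_min_bound_general ρ1 γ hρ hγ0
end

section
/- Fix p_c ∈ (0, 1) and let P = p_c·P_{c1} + (1−p_c)·P_{c2} be the mixture distribution. Then any w = [w1, w2, w3] ∈ W1 minimizing the population exponential loss E_P[exp(−y·wᵀx)] over W1 satisfies w3 = 0 and w1, w2 ∈ span{μ}; that is, the ERM solution lies in the two-dimensional subspace spanned by [μ, 0_d, 0_d] and [0_d, μ, 0_d]. -/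
open MeasureTheory ProbabilityTheory Real Filter
open scoped ENNReal NNReal

/-- The mixture distribution `P = p_c·P_c1 + (1 − p_c)·P_c2`. -/
noncomputable def Pmix (d : ℕ) (μ : Vec d) (σ γ η : ℝ) (pc : ℝ) : Measure (Inp d × ℝ) :=
  ENNReal.ofReal pc • Pc1 d μ σ γ η + ENNReal.ofReal (1 - pc) • Pc2 d μ σ γ η

/-! The Gaussian moment generating function puts the loss in closed form,
`E_P[exp(−y wᵀx)] = F(w₁, w₂) · cosh(w₃ᵀμ) · exp(η²‖w₃‖²/2)`,
where `F` depends on `wᵢ` only through `wᵢᵀμ` and `‖wᵢ‖²` and is strictly increasing in each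
`‖wᵢ‖²`. Replacing `w₃` by `0`, or `w₁` or `w₂` by its orthogonal projection onto `span{μ}`,
stays in the unit ball and strictly lowers the loss unless that block already has the claimed
form. -/

theorem dotProduct_self_nonneg {n : Type*} [Fintype n] (v : n → ℝ) : 0 ≤ v ⬝ᵥ v := by
  simpa using dotProduct_star_self_nonneg v

theorem dotProduct_self_pos {n : Type*} [Fintype n] {v : n → ℝ} (hv : v ≠ 0) : 0 < v ⬝ᵥ v := by
  simpa using Matrix.dotProduct_self_star_pos_iff.2 hv

theorem dotProduct_self_eq_add_dotProduct_self_sub {n : Type*} [Fintype n] (v μ : n → ℝ) (a : ℝ)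
    (h : (v - a • μ) ⬝ᵥ μ = 0) :
    v ⬝ᵥ v = (a • μ) ⬝ᵥ (a • μ) + (v - a • μ) ⬝ᵥ (v - a • μ) := by
  have hv : v = a • μ + (v - a • μ) := by abel
  conv_lhs => rw [hv]
  simp only [add_dotProduct, dotProduct_add, dotProduct_smul, smul_dotProduct, h,
    dotProduct_comm μ (v - a • μ), mul_zero, zero_add, add_zero, smul_eq_mul]

theorem exists_smul_dotProduct_eq_of_ne_smul {n : Type*} [Fintype n] {v μ : n → ℝ}
    (h : ∀ a : ℝ, v ≠ a • μ) :
    ∃ a : ℝ, (a • μ) ⬝ᵥ μ = v ⬝ᵥ μ ∧ (a • μ) ⬝ᵥ (a • μ) < v ⬝ᵥ v := by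
  set a := v ⬝ᵥ μ / μ ⬝ᵥ μ
  have horth : (v - a • μ) ⬝ᵥ μ = 0 := by
    rcases eq_or_ne μ 0 with rfl | hμ
    · simp
    rw [sub_dotProduct, smul_dotProduct, smul_eq_mul,
      div_mul_cancel₀ _ (dotProduct_self_eq_zero.not.2 hμ), sub_self]
  have hres : 0 < (v - a • μ) ⬝ᵥ (v - a • μ) := dotProduct_self_pos (sub_ne_zero.2 (h a))
  refine ⟨a, ?_, ?_⟩
  · rwa [sub_dotProduct, sub_eq_zero, eq_comm] at horth
  · rw [dotProduct_self_eq_add_dotProduct_self_sub v μ a horth]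
    linarith

section Gaussian

variable {d : ℕ}

theorem dot_eq_dotProduct (v w : Vec d) : dot v w = v ⬝ᵥ w := rfl

theorem sum_sq_eq_dotProduct_self (v : Vec d) : ∑ i, v i ^ 2 = v ⬝ᵥ v := by
  simp only [dotProduct, sq]

instance (m : Vec d) (v : ℝ) : IsProbabilityMeasure (gaussVec d m v) := by
  unfold gaussVec; infer_instance

theorem integrable_exp_dotProduct_gaussVec (c m : Vec d) (v : ℝ) :
    Integrable (fun x => exp (c ⬝ᵥ x)) (gaussVec d m v) := by
  simp only [dotProduct, exp_sum]
  exact Integrable.fintype_prod fun i => integrable_exp_mul_gaussianReal (c i)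

theorem integral_exp_dotProduct_gaussVec (c m : Vec d) {v : ℝ} (hv : 0 ≤ v) :
    ∫ x, exp (c ⬝ᵥ x) ∂gaussVec d m v = exp (c ⬝ᵥ m + v * (c ⬝ᵥ c) / 2) := by
  simp only [dotProduct, exp_sum, gaussVec]
  rw [integral_fintype_prod_eq_prod (fun i t => exp (c i * t))]
  have hmgf : ∀ i, ∫ t, exp (c i * t) ∂gaussianReal (m i) v.toNNReal
      = exp (m i * c i + v * c i ^ 2 / 2) := fun i => by
    simpa [mgf, Real.coe_toNNReal _ hv] using
      congrFun (mgf_id_gaussianReal (μ := m i) (v := v.toNNReal)) (c i)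
  rw [Finset.prod_congr rfl fun i _ => hmgf i, ← exp_sum]
  simp only [Finset.sum_add_distrib, ← Finset.sum_div, ← Finset.mul_sum, sq, mul_comm (m _)]

end Gaussian

section Loss

variable {d : ℕ}

theorem pred_smul (a : ℝ) (w x : Inp d) : pred (a • w) x = a * pred w x := by
  simp only [pred, dot_eq_dotProduct, Prod.smul_fst, Prod.smul_snd, smul_dotProduct, smul_eq_mul]
  ring

theorem pred_neg (w x : Inp d) : pred (-w) x = -pred w x := by
  rw [← neg_one_smul ℝ w, pred_smul, neg_one_mul]

theorem exp_pred_eq_mul (c x : Inp d) :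
    exp (pred c x) = exp (c.1 ⬝ᵥ x.1) * (exp (c.2.1 ⬝ᵥ x.2.1) * exp (c.2.2 ⬝ᵥ x.2.2)) := by
  rw [pred, exp_add, exp_add, mul_assoc]
  rfl

theorem integrable_exp_pred_gaussVec_prod (c : Inp d) (m₁ m₂ m₃ : Vec d) (v₁ v₂ v₃ : ℝ) :
    Integrable (fun x => exp (pred c x))
      ((gaussVec d m₁ v₁).prod ((gaussVec d m₂ v₂).prod (gaussVec d m₃ v₃))) := by
  simp only [exp_pred_eq_mul]
  exact (integrable_exp_dotProduct_gaussVec _ _ _).mul_prod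
    ((integrable_exp_dotProduct_gaussVec _ _ _).mul_prod (integrable_exp_dotProduct_gaussVec _ _ _))

theorem integral_exp_pred_gaussVec_prod (c : Inp d) (m₁ m₂ m₃ : Vec d) {v₁ v₂ v₃ : ℝ}
    (h₁ : 0 ≤ v₁) (h₂ : 0 ≤ v₂) (h₃ : 0 ≤ v₃) :
    ∫ x, exp (pred c x) ∂(gaussVec d m₁ v₁).prod ((gaussVec d m₂ v₂).prod (gaussVec d m₃ v₃))
      = exp (pred c (m₁, m₂, m₃)
          + (v₁ * (c.1 ⬝ᵥ c.1) + v₂ * (c.2.1 ⬝ᵥ c.2.1) + v₃ * (c.2.2 ⬝ᵥ c.2.2)) / 2) := by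
  simp only [exp_pred_eq_mul]
  rw [integral_prod_mul (fun x => exp (c.1 ⬝ᵥ x))
      (fun y : Vec d × Vec d => exp (c.2.1 ⬝ᵥ y.1) * exp (c.2.2 ⬝ᵥ y.2)),
    integral_prod_mul (fun x => exp (c.2.1 ⬝ᵥ x)) (fun x => exp (c.2.2 ⬝ᵥ x)),
    integral_exp_dotProduct_gaussVec _ _ h₁, integral_exp_dotProduct_gaussVec _ _ h₂,
    integral_exp_dotProduct_gaussVec _ _ h₃, ← exp_add, ← exp_add]
  simp only [pred, dot_eq_dotProduct]
  congr 1
  ring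

theorem integral_prod_dirac {α β : Type*} [MeasurableSpace α] [MeasurableSpace β]
    [MeasurableSingletonClass β] (ν : Measure α) [SFinite ν] (f : α × β → ℝ) (y : β) :
    ∫ p, f p ∂ν.prod (Measure.dirac y) = ∫ x, f (x, y) ∂ν := by
  rw [Measure.prod_dirac]
  exact (MeasurableEmbedding.id.prodMk_right y).integral_map f

theorem integrable_prod_dirac_iff {α β : Type*} [MeasurableSpace α] [MeasurableSpace β]
    [MeasurableSingletonClass β] (ν : Measure α) [SFinite ν] (f : α × β → ℝ) (y : β) :
    Integrable f (ν.prod (Measure.dirac y)) ↔ Integrable (fun x => f (x, y)) ν := by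
  rw [Measure.prod_dirac]
  exact (MeasurableEmbedding.id.prodMk_right y).integrable_map_iff

variable (cond : ℝ → Measure (Inp d)) [∀ y, SFinite (cond y)]
  (hcond : ∀ c y, Integrable (fun x => exp (pred c x)) (cond y))
include hcond

theorem integrable_expLoss_prod_dirac (w : Inp d) (y : ℝ) :
    Integrable (fun p : Inp d × ℝ => exp (-(p.2 * pred w p.1)))
      ((cond y).prod (Measure.dirac y)) := by
  rw [integrable_prod_dirac_iff]
  simpa only [pred_smul, neg_mul] using hcond ((-y) • w) y

theorem integrable_expLoss_jointOf (w : Inp d) :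
    Integrable (fun p : Inp d × ℝ => exp (-(p.2 * pred w p.1))) (jointOf cond) :=
  ((integrable_expLoss_prod_dirac cond hcond w 1).smul_measure (by simp)).add_measure
    ((integrable_expLoss_prod_dirac cond hcond w (-1)).smul_measure (by simp))

theorem expLoss_jointOf (w : Inp d) :
    expLoss (jointOf cond) w
      = ((∫ x, exp (-pred w x) ∂cond 1) + ∫ x, exp (pred w x) ∂cond (-1)) / 2 := by
  rw [expLoss, jointOf,
    integral_add_measure ((integrable_expLoss_prod_dirac cond hcond w 1).smul_measure (by simp))
      ((integrable_expLoss_prod_dirac cond hcond w (-1)).smul_measure (by simp)),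
    integral_smul_measure, integral_smul_measure, integral_prod_dirac, integral_prod_dirac]
  simp only [one_mul, neg_mul, neg_neg, ENNReal.toReal_inv, ENNReal.toReal_ofNat, smul_eq_mul]
  ring

end Loss

section ClosedForm

variable {d : ℕ} (μ : Vec d) (σ γ η : ℝ)

instance (y : ℝ) : IsProbabilityMeasure (condX1 d μ σ γ η y) := by
  unfold condX1; infer_instance

instance (y : ℝ) : IsProbabilityMeasure (condX2 d μ σ γ η y) := by
  unfold condX2; infer_instance

theorem integrable_exp_pred_condX1 (c : Inp d) (y : ℝ) :
    Integrable (fun x => exp (pred c x)) (condX1 d μ σ γ η y) :=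
  integrable_exp_pred_gaussVec_prod ..

theorem integrable_exp_pred_condX2 (c : Inp d) (y : ℝ) :
    Integrable (fun x => exp (pred c x)) (condX2 d μ σ γ η y) :=
  integrable_exp_pred_gaussVec_prod ..

noncomputable def contextFactor (w₃ : Vec d) : ℝ := cosh (w₃ ⬝ᵥ μ) * exp (η ^ 2 * (w₃ ⬝ᵥ w₃) / 2)

noncomputable def featureFactor (pc : ℝ) (w₁ w₂ : Vec d) : ℝ :=
  pc * exp (σ ^ 2 * (w₁ ⬝ᵥ w₁) / 2 + γ * σ ^ 2 * (w₂ ⬝ᵥ w₂) / 2 - w₁ ⬝ᵥ μ - w₂ ⬝ᵥ μ)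
    + (1 - pc) * exp (σ ^ 2 * (w₁ ⬝ᵥ w₁) / 2 + σ ^ 2 / γ * (w₂ ⬝ᵥ w₂) / 2 - w₁ ⬝ᵥ μ + w₂ ⬝ᵥ μ)

theorem exp_mul_cosh_mul_exp (a b c : ℝ) :
    exp a * (cosh b * exp c) = (exp (a + c - b) + exp (a + c + b)) / 2 := by
  simp only [cosh_eq, exp_sub, exp_add, exp_neg]
  field_simp
  ring

theorem mul_const_eq_smul (y : ℝ) : (fun i => μ i * y) = y • μ :=
  funext fun _ => mul_comm _ _

variable {γ}

theorem expLoss_Pc1 (hγ : 0 ≤ γ) (w : Inp d) :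
    expLoss (Pc1 d μ σ γ η) w
      = exp (σ ^ 2 * (w.1 ⬝ᵥ w.1) / 2 + γ * σ ^ 2 * (w.2.1 ⬝ᵥ w.2.1) / 2 - w.1 ⬝ᵥ μ - w.2.1 ⬝ᵥ μ)
        * contextFactor μ η w.2.2 := by
  rw [Pc1, expLoss_jointOf _ (integrable_exp_pred_condX1 μ σ γ η)]
  simp only [← pred_neg, condX1, mul_const_eq_smul]
  rw [integral_exp_pred_gaussVec_prod _ _ _ _ (sq_nonneg σ) (by positivity) (sq_nonneg η),
    integral_exp_pred_gaussVec_prod _ _ _ _ (sq_nonneg σ) (by positivity) (sq_nonneg η),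
    contextFactor, exp_mul_cosh_mul_exp]
  congr 3 <;> simp only [pred, dot_eq_dotProduct, Prod.fst_neg, Prod.snd_neg, neg_dotProduct,
    dotProduct_neg, neg_neg, dotProduct_smul, smul_eq_mul] <;> ring

theorem expLoss_Pc2 (hγ : 0 ≤ γ) (w : Inp d) :
    expLoss (Pc2 d μ σ γ η) w
      = exp (σ ^ 2 * (w.1 ⬝ᵥ w.1) / 2 + σ ^ 2 / γ * (w.2.1 ⬝ᵥ w.2.1) / 2 - w.1 ⬝ᵥ μ + w.2.1 ⬝ᵥ μ)
        * contextFactor μ η w.2.2 := by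
  rw [Pc2, expLoss_jointOf _ (integrable_exp_pred_condX2 μ σ γ η)]
  simp only [← pred_neg, condX2, mul_const_eq_smul, ← Pi.neg_def]
  rw [integral_exp_pred_gaussVec_prod _ _ _ _ (sq_nonneg σ) (by positivity) (sq_nonneg η),
    integral_exp_pred_gaussVec_prod _ _ _ _ (sq_nonneg σ) (by positivity) (sq_nonneg η),
    contextFactor, ← cosh_neg, exp_mul_cosh_mul_exp]
  congr 3 <;> simp only [pred, dot_eq_dotProduct, Prod.fst_neg, Prod.snd_neg, neg_dotProduct,
    dotProduct_neg, neg_neg, dotProduct_smul, smul_eq_mul] <;> ring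

theorem expLoss_add_smul {P Q : Measure (Inp d × ℝ)} {a b : ℝ≥0∞} (ha : a ≠ ∞) (hb : b ≠ ∞)
    {w : Inp d} (hP : Integrable (fun p : Inp d × ℝ => exp (-(p.2 * pred w p.1))) P)
    (hQ : Integrable (fun p : Inp d × ℝ => exp (-(p.2 * pred w p.1))) Q) :
    expLoss (a • P + b • Q) w = a.toReal * expLoss P w + b.toReal * expLoss Q w := by
  rw [expLoss, integral_add_measure (hP.smul_measure ha) (hQ.smul_measure hb),
    integral_smul_measure, integral_smul_measure]
  rfl

theorem expLoss_Pmix (hγ : 0 ≤ γ) {pc : ℝ} (hpc₀ : 0 ≤ pc) (hpc₁ : pc ≤ 1) (w : Inp d) :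
    expLoss (Pmix d μ σ γ η pc) w
      = featureFactor μ σ γ pc w.1 w.2.1 * contextFactor μ η w.2.2 := by
  rw [Pmix, expLoss_add_smul (P := Pc1 d μ σ γ η) (Q := Pc2 d μ σ γ η)
      ENNReal.ofReal_ne_top ENNReal.ofReal_ne_top
      (integrable_expLoss_jointOf _ (integrable_exp_pred_condX1 μ σ γ η) w)
      (integrable_expLoss_jointOf _ (integrable_exp_pred_condX2 μ σ γ η) w),
    expLoss_Pc1 μ σ η hγ, expLoss_Pc2 μ σ η hγ, ENNReal.toReal_ofReal hpc₀,
    ENNReal.toReal_ofReal (sub_nonneg.2 hpc₁), featureFactor]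
  ring

end ClosedForm

section Comparison

variable {d : ℕ} (μ : Vec d) {σ γ η pc : ℝ}

theorem contextFactor_pos (w₃ : Vec d) : 0 < contextFactor μ η w₃ := by
  unfold contextFactor; positivity

theorem contextFactor_zero : contextFactor μ η 0 = 1 := by
  simp [contextFactor]

theorem one_lt_contextFactor (hη : η ≠ 0) {w₃ : Vec d} (hw₃ : w₃ ≠ 0) :
    1 < contextFactor μ η w₃ := by
  have hsq : 0 < w₃ ⬝ᵥ w₃ := dotProduct_self_pos hw₃
  exact one_lt_mul_of_le_of_lt (one_le_cosh _) (Real.one_lt_exp_iff.2 (by positivity))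

theorem featureFactor_pos (hpc₀ : 0 < pc) (hpc₁ : pc ≤ 1) (w₁ w₂ : Vec d) :
    0 < featureFactor μ σ γ pc w₁ w₂ :=
  add_pos_of_pos_of_nonneg (by positivity) (mul_nonneg (sub_nonneg.2 hpc₁) (exp_pos _).le)

theorem mul_exp_add_mul_exp_lt (hpc₀ : 0 < pc) (hpc₁ : pc ≤ 1) {a a' b b' : ℝ} (ha : a' < a)
    (hb : b' < b) : pc * exp a' + (1 - pc) * exp b' < pc * exp a + (1 - pc) * exp b :=
  add_lt_add_of_lt_of_le (mul_lt_mul_of_pos_left (exp_lt_exp.2 ha) hpc₀)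
    (mul_le_mul_of_nonneg_left (exp_le_exp.2 hb.le) (sub_nonneg.2 hpc₁))

theorem featureFactor_lt_of_left (hσ : σ ≠ 0) (hpc₀ : 0 < pc) (hpc₁ : pc ≤ 1)
    {w₁ w₁' w₂ : Vec d} (hμ : w₁' ⬝ᵥ μ = w₁ ⬝ᵥ μ) (hlt : w₁' ⬝ᵥ w₁' < w₁ ⬝ᵥ w₁) :
    featureFactor μ σ γ pc w₁' w₂ < featureFactor μ σ γ pc w₁ w₂ := by
  have h : σ ^ 2 * (w₁' ⬝ᵥ w₁') < σ ^ 2 * (w₁ ⬝ᵥ w₁) := by gcongr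
  unfold featureFactor
  rw [hμ]
  apply mul_exp_add_mul_exp_lt hpc₀ hpc₁ <;> linarith

theorem featureFactor_lt_of_right (hσ : σ ≠ 0) (hγ : 0 < γ) (hpc₀ : 0 < pc) (hpc₁ : pc ≤ 1)
    {w₁ w₂ w₂' : Vec d} (hμ : w₂' ⬝ᵥ μ = w₂ ⬝ᵥ μ) (hlt : w₂' ⬝ᵥ w₂' < w₂ ⬝ᵥ w₂) :
    featureFactor μ σ γ pc w₁ w₂' < featureFactor μ σ γ pc w₁ w₂ := by
  have h₁ : γ * σ ^ 2 * (w₂' ⬝ᵥ w₂') < γ * σ ^ 2 * (w₂ ⬝ᵥ w₂) := by gcongr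
  have h₂ : σ ^ 2 / γ * (w₂' ⬝ᵥ w₂') < σ ^ 2 / γ * (w₂ ⬝ᵥ w₂) := by gcongr
  unfold featureFactor
  rw [hμ]
  apply mul_exp_add_mul_exp_lt hpc₀ hpc₁ <;> linarith

theorem xnorm_eq (x : Inp d) : xnorm x = √(x.1 ⬝ᵥ x.1 + x.2.1 ⬝ᵥ x.2.1 + x.2.2 ⬝ᵥ x.2.2) := by
  simp only [xnorm, sum_sq_eq_dotProduct_self]

theorem mem_W1_of_dotProduct_self_le {w w' : Inp d} (hw : w ∈ W1 d)
    (h₁ : w'.1 ⬝ᵥ w'.1 ≤ w.1 ⬝ᵥ w.1) (h₂ : w'.2.1 ⬝ᵥ w'.2.1 ≤ w.2.1 ⬝ᵥ w.2.1)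
    (h₃ : w'.2.2 ⬝ᵥ w'.2.2 ≤ w.2.2 ⬝ᵥ w.2.2) : w' ∈ W1 d := by
  refine le_trans ?_ (show xnorm w ≤ 1 from hw)
  rw [xnorm_eq, xnorm_eq]
  gcongr

end Comparison

theorem erm_solution_in_subspace_general (d : ℕ) (μ : Vec d)
    (σ γ η : ℝ) (hσ : 0 < σ) (hγ : 0 < γ) (hη : 0 < η)
    (pc : ℝ) (hpc : pc ∈ Set.Ioo (0 : ℝ) 1)
    (w : Inp d) (hmem : w ∈ W1 d)
    (hmin : ∀ w' ∈ W1 d,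
      expLoss (Pmix d μ σ γ η pc) w ≤ expLoss (Pmix d μ σ γ η pc) w') :
    w.2.2 = 0 ∧ (∃ a : ℝ, w.1 = a • μ) ∧ (∃ b : ℝ, w.2.1 = b • μ) := by
  obtain ⟨hpc₀, hpc₁⟩ := hpc
  have hmin' : ∀ w' ∈ W1 d, featureFactor μ σ γ pc w.1 w.2.1 * contextFactor μ η w.2.2
      ≤ featureFactor μ σ γ pc w'.1 w'.2.1 * contextFactor μ η w'.2.2 := fun w' hw' => by
    simpa only [expLoss_Pmix μ σ η hγ.le hpc₀.le hpc₁.le] using hmin w' hw'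
  have hK := contextFactor_pos μ (η := η) w.2.2
  refine ⟨?_, ?_, ?_⟩
  · by_contra h₃
    have hle := hmin' (w.1, w.2.1, 0) (mem_W1_of_dotProduct_self_le hmem le_rfl le_rfl
      ((zero_dotProduct 0).trans_le (dotProduct_self_nonneg _)))
    rw [contextFactor_zero, mul_one] at hle
    exact (lt_mul_of_one_lt_right (featureFactor_pos μ hpc₀ hpc₁.le w.1 w.2.1)
      (one_lt_contextFactor μ hη.ne' h₃)).not_ge hle
  · by_contra! h₁
    obtain ⟨a, haμ, halt⟩ := exists_smul_dotProduct_eq_of_ne_smul h₁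
    have hle := hmin' (a • μ, w.2.1, w.2.2)
      (mem_W1_of_dotProduct_self_le hmem halt.le le_rfl le_rfl)
    exact (mul_lt_mul_of_pos_right (featureFactor_lt_of_left μ hσ.ne' hpc₀ hpc₁.le haμ halt)
      hK).not_ge hle
  · by_contra! h₂
    obtain ⟨b, hbμ, hblt⟩ := exists_smul_dotProduct_eq_of_ne_smul h₂
    have hle := hmin' (w.1, b • μ, w.2.2) (mem_W1_of_dotProduct_self_le hmem le_rfl hblt.le le_rfl)
    exact (mul_lt_mul_of_pos_right (featureFactor_lt_of_right μ hσ.ne' hγ hpc₀ hpc₁.le hbμ hblt)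
      hK).not_ge hle

theorem erm_solution_in_subspace (d : ℕ) (hd : 1 ≤ d) (μ : Vec d) (hμ : μ ≠ 0)
    (σ γ η : ℝ) (hσ : 0 < σ) (hγ : 0 < γ) (hη : 0 < η)
    (pc : ℝ) (hpc : pc ∈ Set.Ioo (0 : ℝ) 1)
    (w : Inp d) (hmem : w ∈ W1 d)
    (hmin : ∀ w' ∈ W1 d,
      expLoss (Pmix d μ σ γ η pc) w ≤ expLoss (Pmix d μ σ γ η pc) w') :
    w.2.2 = 0 ∧ (∃ a : ℝ, w.1 = a • μ) ∧ (∃ b : ℝ, w.2.1 = b • μ) :=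
  erm_solution_in_subspace_general d μ σ γ η hσ hγ hη pc hpc w hmem hmin
end
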